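/- arXiv:1409.4292 — 3 statements merged into one kernel-verified Lean document; each statement's English description precedes it below -/
import Mathlib

section
/- Let n ≥ 1, let A be a symmetric n×n real matrix, ω a skew-symmetric n×n real matrix, d, N ∈ ℝⁿ, and let μ₁, μ₂, μ₃, μ₅, μ₆ be real numbers. Set λ₁ := μ₂−μ₃, λ₂ := μ₅−μ₆ and ρ := λ₁N + λ₂(Ad), and let σ := μ₁(dᵀAd)(d⊗d) + μ₂(N⊗d) + μ₃(d⊗N) + μ₅((Ad)⊗d) + μ₆(d⊗(Ad)). Then ⟨σ, A+ω⟩_F − ⟨ωd, ρ⟩ = μ₁(dᵀAd)² + (μ₂+μ₃)⟨N, Ad⟩ + (μ₅+μ₆)|Ad|²; in particular all terms involving the skew-symmetric part ω cancel. -/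
open Matrix BigOperators

/-!
Write `a = A d` and contract each dyad `x ⊗ y` of the stress against `A + ω` as `⟨x, (A + ω) y⟩`.
Symmetry of `A` turns the `A`-parts into `μ₁ (dᵀAd)² + (μ₂ + μ₃)⟨N, a⟩ + (μ₅ + μ₆)|a|²`, while
skew-symmetry of `ω` kills `⟨d, ω d⟩` and turns the `ω`-parts into
`(μ₂ - μ₃)⟨N, ω d⟩ + (μ₅ - μ₆)⟨a, ω d⟩ = ⟨ω d, ρ⟩`.
-/

namespace Matrix

variable {ι R : Type*} [Fintype ι]

theorem sum_sum_vecMulVec_mul [CommSemiring R] (x y : ι → R) (M : Matrix ι ι R) :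
    ∑ i, ∑ j, vecMulVec x y i j * M i j = x ⬝ᵥ M *ᵥ y := by
  simp only [vecMulVec_apply, dotProduct, mulVec, Finset.mul_sum]
  exact Finset.sum_congr rfl fun i _ => Finset.sum_congr rfl fun j _ => by ring

theorem dotProduct_mulVec_comm_of_transpose_eq [CommSemiring R] {A : Matrix ι ι R}
    (hA : Aᵀ = A) (x y : ι → R) : x ⬝ᵥ A *ᵥ y = y ⬝ᵥ A *ᵥ x := by
  rw [dotProduct_mulVec, ← mulVec_transpose, hA, dotProduct_comm]

theorem dotProduct_mulVec_anticomm_of_transpose_eq_neg [CommRing R] {ω : Matrix ι ι R}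
    (hω : ωᵀ = -ω) (x y : ι → R) : x ⬝ᵥ ω *ᵥ y = -(y ⬝ᵥ ω *ᵥ x) := by
  rw [dotProduct_mulVec, ← mulVec_transpose, hω, neg_mulVec, neg_dotProduct, dotProduct_comm]

theorem dotProduct_mulVec_self_of_transpose_eq_neg [CommRing R] [NoZeroDivisors R] [CharZero R]
    {ω : Matrix ι ι R} (hω : ωᵀ = -ω) (x : ι → R) : x ⬝ᵥ ω *ᵥ x = 0 :=
  CharZero.eq_neg_self_iff.mp (dotProduct_mulVec_anticomm_of_transpose_eq_neg hω x x)

end Matrix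

theorem leslie_stress_rotation_cancellation_general
    (n : ℕ)
    (A ω : Matrix (Fin n) (Fin n) ℝ)
    (hA : Aᵀ = A) (hω : ωᵀ = -ω)
    (d N : Fin n → ℝ) (μ₁ μ₂ μ₃ μ₅ μ₆ lam₁ lam₂ : ℝ)
    (hlam₁ : lam₁ = μ₂ - μ₃) (hlam₂ : lam₂ = μ₅ - μ₆) :
    (∑ i, ∑ j,
      ((μ₁ * (d ⬝ᵥ A.mulVec d)) • vecMulVec d d + μ₂ • vecMulVec N d
        + μ₃ • vecMulVec d N + μ₅ • vecMulVec (A.mulVec d) d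
        + μ₆ • vecMulVec d (A.mulVec d)) i j * (A + ω) i j)
      - ω.mulVec d ⬝ᵥ (lam₁ • N + lam₂ • A.mulVec d)
      = μ₁ * (d ⬝ᵥ A.mulVec d) ^ 2 + (μ₂ + μ₃) * (N ⬝ᵥ A.mulVec d)
        + (μ₅ + μ₆) * (A.mulVec d ⬝ᵥ A.mulVec d) := by
  simp only [Matrix.add_apply, Matrix.smul_apply, smul_eq_mul, add_mul, mul_assoc,
    Finset.sum_add_distrib, ← Finset.mul_sum]
  simp only [← Matrix.add_apply A ω, sum_sum_vecMulVec_mul]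
  simp only [add_mulVec, dotProduct_add, dotProduct_comm (ω *ᵥ d), add_dotProduct,
    smul_dotProduct, smul_eq_mul]
  rw [dotProduct_mulVec_self_of_transpose_eq_neg hω,
    dotProduct_mulVec_anticomm_of_transpose_eq_neg hω d N,
    dotProduct_mulVec_anticomm_of_transpose_eq_neg hω d (A *ᵥ d),
    dotProduct_mulVec_comm_of_transpose_eq hA d N,
    dotProduct_mulVec_comm_of_transpose_eq hA d (A *ᵥ d), hlam₁, hlam₂]
  ring

/-- In the Ericksen–Leslie energy law the contraction of the Leslie stress
with the velocity gradient, corrected by the rotation term `⟨ωd, ρ⟩` with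
`ρ = lam₁ N + lam₂ A d`, contains no contribution from the skew-symmetric part
`ω`. -/
theorem leslie_stress_rotation_cancellation
    (n : ℕ) (hn : 1 ≤ n)
    (A ω : Matrix (Fin n) (Fin n) ℝ)
    (hA : Aᵀ = A) (hω : ωᵀ = -ω)
    (d N : Fin n → ℝ) (μ₁ μ₂ μ₃ μ₅ μ₆ lam₁ lam₂ : ℝ)
    (hlam₁ : lam₁ = μ₂ - μ₃) (hlam₂ : lam₂ = μ₅ - μ₆) :
    (∑ i, ∑ j,
      ((μ₁ * (d ⬝ᵥ A.mulVec d)) • vecMulVec d d + μ₂ • vecMulVec N d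
        + μ₃ • vecMulVec d N + μ₅ • vecMulVec (A.mulVec d) d
        + μ₆ • vecMulVec d (A.mulVec d)) i j * (A + ω) i j)
      - ω.mulVec d ⬝ᵥ (lam₁ • N + lam₂ • A.mulVec d)
      = μ₁ * (d ⬝ᵥ A.mulVec d) ^ 2 + (μ₂ + μ₃) * (N ⬝ᵥ A.mulVec d)
        + (μ₅ + μ₆) * (A.mulVec d ⬝ᵥ A.mulVec d) :=
  leslie_stress_rotation_cancellation_general n A ω hA hω d N μ₁ μ₂ μ₃ μ₅ μ₆ lam₁ lam₂ hlam₁ hlam₂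
end

section
/- Let y : [0,∞) → [0,∞) be absolutely continuous and integrable on (0,∞), and suppose there exist a constant C ≥ 0 and a nonnegative integrable function Λ ∈ L¹(0,∞) such that y′(t) ≤ C + Λ(t) for almost every t ≥ 0. Then y(t) → 0 as t → ∞. -/
/-!
Fix `ε > 0` and a window length `δ` with `C δ ≤ ε / 4`. Far out, the integrals of `Λ` over
subintervals of `[t - δ, t]` are below `ε / 4` and the integral of `y` over `[t - δ, t]` is below
`δ ε / 2`. Since `y` can grow at most by `C δ + ∫ Λ` on the window, `y t ≥ ε` would force
`y ≥ ε / 2` on the whole window, hence `∫ y ≥ δ ε / 2`: a contradiction.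
-/

open MeasureTheory intervalIntegral

open Filter Set

section IntegrableOnIoi

variable {E : Type*} [NormedAddCommGroup E] {f : ℝ → E} {μ : Measure ℝ} {a : ℝ}

lemma MeasureTheory.IntegrableOn.intervalIntegrable_of_Ioi {s t : ℝ}
    (hf : IntegrableOn f (Ioi a) μ) (has : a ≤ s) (hst : s ≤ t) :
    IntervalIntegrable f μ s t :=
  (intervalIntegrable_iff_integrableOn_Ioc_of_le hst).2 <|
    hf.mono_set <| Ioc_subset_Ioi_self.trans <| Ioi_subset_Ioi has

lemma MeasureTheory.IntegrableOn.eventually_norm_intervalIntegral_lt [NormedSpace ℝ E] {ε : ℝ}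
    (hf : IntegrableOn f (Ioi a) μ) (hε : 0 < ε) :
    ∀ᶠ s in atTop, ∀ t, s ≤ t → ‖∫ x in s..t, f x ∂μ‖ < ε := by
  have hF := (intervalIntegral_tendsto_integral_Ioi a hf tendsto_id).eventually
    (Metric.ball_mem_nhds _ (half_pos hε))
  filter_upwards [eventually_forall_ge_atTop.2 hF, eventually_ge_atTop a] with s hFs has t hst
  rw [← integral_interval_sub_left (hf.intervalIntegrable_of_Ioi le_rfl (has.trans hst))
    (hf.intervalIntegrable_of_Ioi le_rfl has), ← dist_eq_norm]
  calc _ ≤ _ := dist_triangle_right _ _ (∫ x in Ioi a, f x ∂μ)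
    _ < ε / 2 + ε / 2 := add_lt_add (hFs t hst) (hFs s le_rfl)
    _ = ε := add_halves ε

end IntegrableOnIoi

lemma sub_le_of_ae_deriv_le_const_add {y y' Λ : ℝ → ℝ} {C s t : ℝ} (hst : s ≤ t)
    (hy' : IntervalIntegrable y' volume s t) (hΛ : IntervalIntegrable Λ volume s t)
    (hFTC : y t - y s = ∫ r in s..t, y' r) (hle : ∀ᵐ r, r ∈ Icc s t → y' r ≤ C + Λ r) :
    y t - y s ≤ C * (t - s) + ∫ r in s..t, Λ r := by
  have hmono : ∫ r in s..t, y' r ≤ ∫ r in s..t, (C + Λ r) :=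
    integral_mono_ae_restrict hst hy' (intervalIntegrable_const.add hΛ) <| by
      filter_upwards [ae_restrict_of_ae hle, ae_restrict_mem measurableSet_Icc] with r hr hrI
      exact hr hrI
  rwa [integral_add intervalIntegrable_const hΛ, intervalIntegral.integral_const, smul_eq_mul,
    mul_comm, ← hFTC] at hmono

theorem integrable_decay_to_zero_general
    (y y' Λ : ℝ → ℝ) (C : ℝ) (hC : 0 ≤ C)
    (hy_nonneg : ∀ t : ℝ, 0 ≤ t → 0 ≤ y t)
    (hy'_int : ∀ s t : ℝ, 0 ≤ s → s ≤ t → IntervalIntegrable y' volume s t)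
    (hFTC : ∀ s t : ℝ, 0 ≤ s → s ≤ t → y t - y s = ∫ r in s..t, y' r)
    (hy_int : IntegrableOn y (Set.Ioi 0))
    (hΛ_int : IntegrableOn Λ (Set.Ioi 0))
    (hineq : ∀ᵐ t ∂volume, 0 ≤ t → y' t ≤ C + Λ t) :
    Filter.Tendsto y Filter.atTop (nhds 0) := by
  refine tendsto_order.2 ⟨fun a ha => ?_, fun ε hε => ?_⟩
  · filter_upwards [eventually_ge_atTop 0] with t ht using ha.trans_le (hy_nonneg t ht)
  set δ := ε / (4 * (C + 1))
  have hδ : 0 < δ := by positivity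
  have hCδ : C * δ ≤ ε / 4 := by
    rw [mul_div_assoc', div_le_div_iff₀ (by positivity) (by norm_num)]
    nlinarith
  have hshift : Tendsto (· - δ) atTop atTop :=
    tendsto_atTop_atTop.2 fun b => ⟨b + δ, fun t ht => le_sub_iff_add_le.2 ht⟩
  filter_upwards [hshift.eventually (eventually_ge_atTop 0),
    hshift.eventually (eventually_forall_ge_atTop.2 (hΛ_int.eventually_norm_intervalIntegral_lt
      (div_pos hε four_pos))),
    hshift.eventually
      (hy_int.eventually_norm_intervalIntegral_lt (by positivity : 0 < δ * (ε / 2)))]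
    with t ht0 hΛ_tail hy_tail
  by_contra! hεt
  have hplateau : ∀ s ∈ Icc (t - δ) t, ε / 2 ≤ y s := by
    intro s ⟨hs, hst⟩
    have hs0 : 0 ≤ s := ht0.trans hs
    have hgrowth := sub_le_of_ae_deriv_le_const_add hst (hy'_int s t hs0 hst)
      (hΛ_int.intervalIntegrable_of_Ioi hs0 hst) (hFTC s t hs0 hst)
      (hineq.mono fun r hr hrI => hr (hs0.trans hrI.1))
    have hCts : C * (t - s) ≤ C * δ := mul_le_mul_of_nonneg_left (by linarith) hC
    linarith [(Real.le_norm_self _).trans_lt (hΛ_tail s hs t hst)]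
  have hmass : δ * (ε / 2) ≤ ∫ r in (t - δ)..t, y r := by
    have h := integral_mono_on (by linarith) intervalIntegrable_const
      (hy_int.intervalIntegrable_of_Ioi ht0 (by linarith)) hplateau
    rwa [intervalIntegral.integral_const, smul_eq_mul, sub_sub_cancel] at h
  linarith [(Real.le_norm_self _).trans_lt (hy_tail t (by linarith))]

/-- Decay lemma: an absolutely continuous, nonnegative, integrable function
on `(0,∞)` whose derivative is bounded above by `C + Λ(t)` with `Λ`
nonnegative and integrable tends to `0` at infinity. -/
theorem integrable_decay_to_zero
    (y y' Λ : ℝ → ℝ) (C : ℝ) (hC : 0 ≤ C)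
    (hy_nonneg : ∀ t : ℝ, 0 ≤ t → 0 ≤ y t)
    (hy'_int : ∀ s t : ℝ, 0 ≤ s → s ≤ t → IntervalIntegrable y' volume s t)
    (hFTC : ∀ s t : ℝ, 0 ≤ s → s ≤ t → y t - y s = ∫ r in s..t, y' r)
    (hy_int : IntegrableOn y (Set.Ioi 0))
    (hΛ_nonneg : ∀ t : ℝ, 0 ≤ t → 0 ≤ Λ t)
    (hΛ_int : IntegrableOn Λ (Set.Ioi 0))
    (hineq : ∀ᵐ t ∂volume, 0 ≤ t → y' t ≤ C + Λ t) :
    Filter.Tendsto y Filter.atTop (nhds 0) :=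
  integrable_decay_to_zero_general y y' Λ C hC hy_nonneg hy'_int hFTC hy_int hΛ_int hineq
end

section
/- Let (X, dist) be a metric space, B ⊆ X a nonempty set, and let S(t) : B → B for t ≥ 0 be a semigroup of maps (S(0) = id and S(t+s) = S(t)∘S(s) for all t, s ≥ 0). Fix T > 0 and assume: (i) there is L ≥ 1 such that for every t ∈ [0,T] the map S(t) is Lipschitz on B with constant L; (ii) the map (t, b) ↦ S(t)b is continuous on [0,T] × B; (iii) there is a compact set M_d ⊆ B with S(T)(M_d) ⊆ M_d and constants C₀ ≥ 0, χ > 0 such that the Hausdorff semidistance satisfies dist(S(T)ⁿ(B), M_d) := sup_{b∈B} inf_{y∈M_d} dist(S(T)ⁿ b, y) ≤ C₀e^{−χn} for all n ∈ ℕ. Then the set M := ⋃_{t∈[0,T]} S(t)(M_d) is compact, satisfies S(t)(M) ⊆ M for all t ≥ 0, and there exist C′ ≥ 0 and τ > 0 such that dist(S(t)(B), M) ≤ C′e^{−τt} for all t ≥ 0 (one may take τ = χ/T and C′ = L C₀ e^{χ}). -/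
/-!
Every time `s ≥ 0` splits as `s = r + n T` with `r ∈ [0, T]`, so that `S(s) = S(r) ∘ S(T)ⁿ` on `B`.
Then `M = ⋃_{r ∈ [0,T]} S(r) M_d` is the continuous image of the compact set `[0,T] × M_d`; it is
positively invariant because `S(s)(S(r) m) = S(r') (S(T)ⁿ m)` and `S(T)ⁿ m ∈ M_d`; and the
`L`-Lipschitz map `S(r)` carries the estimate `dist(S(T)ⁿ b, M_d) ≤ C₀ e^{-χ n}` over to
`dist(S(s) b, S(r) M_d) ≤ L C₀ e^{-χ n} ≤ L C₀ e^{χ} e^{-(χ/T) s}`.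
-/

open Set Metric
open scoped NNReal

theorem LipschitzOnWith.infDist_image_le {X Y : Type*} [PseudoMetricSpace X]
    [PseudoMetricSpace Y] {K : ℝ≥0} {f : X → Y} {s t : Set X} (hf : LipschitzOnWith K f s)
    (hts : t ⊆ s) {x : X} (hx : x ∈ s) :
    infDist (f x) (f '' t) ≤ K * infDist x t := by
  rcases t.eq_empty_or_nonempty with rfl | ht
  · simp
  have : Nonempty t := ht.to_subtype
  rw [infDist_eq_iInf (x := x) (s := t), Real.mul_iInf_of_nonneg K.coe_nonneg]
  exact le_ciInf fun y => (infDist_le_dist_of_mem (mem_image_of_mem f y.2)).trans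
    (hf.dist_le_mul x hx y (hts y.2))

theorem isCompact_biUnion_image_of_continuousOn {α β γ : Type*} [TopologicalSpace α]
    [TopologicalSpace β] [TopologicalSpace γ] {F : α → β → γ} {I : Set α} {K : Set β}
    (hI : IsCompact I) (hK : IsCompact K)
    (hF : ContinuousOn (fun p : α × β => F p.1 p.2) (I ×ˢ K)) :
    IsCompact (⋃ t ∈ I, F t '' K) := by
  rw [iUnion_image_left, ← image_prod]
  exact (hI.prod hK).image_of_continuousOn hF

theorem exists_eq_add_nat_mul {T s : ℝ} (hT : 0 < T) (hs : 0 ≤ s) :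
    ∃ n : ℕ, ∃ r ∈ Icc 0 T, s = r + n * T := by
  have hfloor : (⌊s / T⌋₊ : ℝ) * T ≤ s := (le_div_iff₀ hT).1 (Nat.floor_le (by positivity))
  have hlt : s < (⌊s / T⌋₊ + 1) * T := (div_lt_iff₀ hT).1 (Nat.lt_floor_add_one _)
  exact ⟨⌊s / T⌋₊, s - ⌊s / T⌋₊ * T, ⟨by linarith, by linarith⟩, by ring⟩

theorem exp_neg_mul_nat_le {χ T r : ℝ} (hχ : 0 ≤ χ) (hT : 0 < T) (hr : r ≤ T) (n : ℕ) :
    Real.exp (-χ * n) ≤ Real.exp χ * Real.exp (-(χ / T) * (r + n * T)) := by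
  rw [← Real.exp_add, Real.exp_le_exp]
  have hrχ : χ / T * r ≤ χ := by
    calc χ / T * r ≤ χ / T * T := by gcongr
      _ = χ := div_mul_cancel₀ χ hT.ne'
  have hsplit : -(χ / T) * (r + n * T) = -(χ / T * r) - χ * n := by field_simp; ring
  linarith

/-- The semigroup law of `S` on `B`, without the normalisation `S 0 = id`. -/
structure IsSemigroupOn {X : Type*} (S : ℝ → X → X) (B : Set X) : Prop where
  mapsTo : ∀ t : ℝ, 0 ≤ t → MapsTo (S t) B B
  add_apply : ∀ t s : ℝ, 0 ≤ t → 0 ≤ s → ∀ b ∈ B, S (t + s) b = S t (S s b)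

namespace IsSemigroupOn

variable {X : Type*} {S : ℝ → X → X} {B : Set X} {T : ℝ}

theorem add_nat_mul_apply (hS : IsSemigroupOn S B) (hT : 0 ≤ T) {r : ℝ} (hr : 0 ≤ r) (n : ℕ)
    {b : X} (hb : b ∈ B) : S (r + n * T) b = S r ((S T)^[n] b) := by
  induction n generalizing b with
  | zero => simp
  | succ n ih =>
    rw [Nat.cast_succ, add_one_mul, ← add_assoc, hS.add_apply _ _ (by positivity) hT b hb,
      ih (hS.mapsTo T hT hb), Function.iterate_succ_apply]

theorem exists_apply_eq_iterate (hS : IsSemigroupOn S B) (hT : 0 < T) {s : ℝ} (hs : 0 ≤ s)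
    {b : X} (hb : b ∈ B) :
    ∃ n : ℕ, ∃ r ∈ Icc 0 T, s = r + n * T ∧ S s b = S r ((S T)^[n] b) := by
  obtain ⟨n, r, hr, rfl⟩ := exists_eq_add_nat_mul hT hs
  exact ⟨n, r, hr, rfl, hS.add_nat_mul_apply hT.le hr.1 n hb⟩

theorem mapsTo_biUnion_image (hS : IsSemigroupOn S B) (hT : 0 < T) {Md : Set X}
    (hMdB : Md ⊆ B) (hMd : MapsTo (S T) Md Md) {t : ℝ} (ht : 0 ≤ t) :
    MapsTo (S t) (⋃ t' ∈ Icc 0 T, S t' '' Md) (⋃ t' ∈ Icc 0 T, S t' '' Md) := by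
  intro x hx
  obtain ⟨t', ht', m, hm, rfl⟩ := mem_iUnion₂.1 hx
  obtain ⟨n, r, hr, -, hrn⟩ :=
    hS.exists_apply_eq_iterate hT (add_nonneg ht ht'.1) (hMdB hm)
  rw [← hS.add_apply t t' ht ht'.1 m (hMdB hm), hrn]
  exact mem_iUnion₂.2 ⟨r, hr, mem_image_of_mem _ (hMd.iterate n hm)⟩

theorem infDist_biUnion_image_le [PseudoMetricSpace X] (hS : IsSemigroupOn S B) (hT : 0 < T)
    {K : ℝ≥0} (hlip : ∀ t ∈ Icc 0 T, LipschitzOnWith K (S t) B) {Md : Set X} (hMdB : Md ⊆ B)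
    {C₀ χ : ℝ} (hC₀ : 0 ≤ C₀) (hχ : 0 ≤ χ)
    (hattr : ∀ n : ℕ, ∀ b ∈ B, infDist ((S T)^[n] b) Md ≤ C₀ * Real.exp (-χ * n))
    {t : ℝ} (ht : 0 ≤ t) {b : X} (hb : b ∈ B) :
    infDist (S t b) (⋃ t' ∈ Icc 0 T, S t' '' Md) ≤
      K * C₀ * Real.exp χ * Real.exp (-(χ / T) * t) := by
  rcases Md.eq_empty_or_nonempty with rfl | hMd
  · simp only [image_empty, iUnion_empty, infDist_empty]
    positivity
  obtain ⟨n, r, hr, rfl, hrn⟩ := hS.exists_apply_eq_iterate hT ht hb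
  have hbn : (S T)^[n] b ∈ B := (hS.mapsTo T hT.le).iterate n hb
  calc infDist (S (r + n * T) b) (⋃ t' ∈ Icc 0 T, S t' '' Md)
      ≤ infDist (S r ((S T)^[n] b)) (S r '' Md) := by
        rw [hrn]
        exact infDist_le_infDist_of_subset (subset_biUnion_of_mem (u := (S · '' Md)) hr)
          (hMd.image _)
    _ ≤ K * infDist ((S T)^[n] b) Md := (hlip r hr).infDist_image_le hMdB hbn
    _ ≤ K * (C₀ * (Real.exp χ * Real.exp (-(χ / T) * (r + n * T)))) := by
        gcongr
        exact (hattr n b hb).trans (by gcongr; exact exp_neg_mul_nat_le hχ hT hr.2 n)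
    _ = K * C₀ * Real.exp χ * Real.exp (-(χ / T) * (r + n * T)) := by ring

end IsSemigroupOn

theorem discrete_to_continuous_exponential_attractor_general
    {X : Type*} [MetricSpace X] (B : Set X)
    (S : ℝ → X → X)
    (hmaps : ∀ t : ℝ, 0 ≤ t → Set.MapsTo (S t) B B)
    (hsemi : ∀ t s : ℝ, 0 ≤ t → 0 ≤ s → ∀ b ∈ B, S (t + s) b = S t (S s b))
    (T : ℝ) (hT : 0 < T)
    (L : ℝ)
    (hlip : ∀ t ∈ Set.Icc (0 : ℝ) T, ∀ b₁ ∈ B, ∀ b₂ ∈ B,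
      dist (S t b₁) (S t b₂) ≤ L * dist b₁ b₂)
    (hcont : ContinuousOn (fun p : ℝ × X => S p.1 p.2) (Set.Icc (0 : ℝ) T ×ˢ B))
    (Md : Set X) (hMdB : Md ⊆ B) (hMdcomp : IsCompact Md)
    (hMdinv : S T '' Md ⊆ Md)
    (C₀ χ : ℝ) (hC₀ : 0 ≤ C₀) (hχ : 0 < χ)
    (hattr : ∀ n : ℕ, ∀ b ∈ B,
      Metric.infDist ((S T)^[n] b) Md ≤ C₀ * Real.exp (-χ * n)) :
    IsCompact (⋃ t ∈ Set.Icc (0 : ℝ) T, S t '' Md)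
    ∧ (∀ t : ℝ, 0 ≤ t →
        S t '' (⋃ t' ∈ Set.Icc (0 : ℝ) T, S t' '' Md) ⊆
          ⋃ t' ∈ Set.Icc (0 : ℝ) T, S t' '' Md)
    ∧ ∃ C' : ℝ, 0 ≤ C' ∧ ∃ τ : ℝ, 0 < τ ∧ ∀ t : ℝ, 0 ≤ t → ∀ b ∈ B,
        Metric.infDist (S t b) (⋃ t' ∈ Set.Icc (0 : ℝ) T, S t' '' Md) ≤
          C' * Real.exp (-τ * t) := by
  have hS : IsSemigroupOn S B := ⟨hmaps, hsemi⟩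
  have hlipOn : ∀ t ∈ Icc 0 T, LipschitzOnWith L.toNNReal (S t) B :=
    fun t ht => .of_dist_le' (hlip t ht)
  have hMd : MapsTo (S T) Md Md := mapsTo_iff_image_subset.2 hMdinv
  refine ⟨isCompact_biUnion_image_of_continuousOn isCompact_Icc hMdcomp
      (hcont.mono (prod_mono subset_rfl hMdB)),
    fun t ht => (hS.mapsTo_biUnion_image hT hMdB hMd ht).image_subset,
    L.toNNReal * C₀ * Real.exp χ, by positivity, χ / T, div_pos hχ hT,
    fun t ht b hb => hS.infDist_biUnion_image_le hT hlipOn hMdB hC₀ hχ.le hattr ht hb⟩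

/-- Passage from a discrete exponential attractor of the time-`T` map to an
exponentially attracting, compact, positively invariant set for the
continuous-time semigroup (formula (st) in the proof of Theorem 4.9). -/
theorem discrete_to_continuous_exponential_attractor
    {X : Type*} [MetricSpace X] (B : Set X) (hB : B.Nonempty)
    (S : ℝ → X → X)
    (hmaps : ∀ t : ℝ, 0 ≤ t → Set.MapsTo (S t) B B)
    (hid : ∀ b ∈ B, S 0 b = b)
    (hsemi : ∀ t s : ℝ, 0 ≤ t → 0 ≤ s → ∀ b ∈ B, S (t + s) b = S t (S s b))
    (T : ℝ) (hT : 0 < T)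
    (L : ℝ) (hL : 1 ≤ L)
    (hlip : ∀ t ∈ Set.Icc (0 : ℝ) T, ∀ b₁ ∈ B, ∀ b₂ ∈ B,
      dist (S t b₁) (S t b₂) ≤ L * dist b₁ b₂)
    (hcont : ContinuousOn (fun p : ℝ × X => S p.1 p.2) (Set.Icc (0 : ℝ) T ×ˢ B))
    (Md : Set X) (hMdB : Md ⊆ B) (hMdcomp : IsCompact Md)
    (hMdinv : S T '' Md ⊆ Md)
    (C₀ χ : ℝ) (hC₀ : 0 ≤ C₀) (hχ : 0 < χ)
    (hattr : ∀ n : ℕ, ∀ b ∈ B,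
      Metric.infDist ((S T)^[n] b) Md ≤ C₀ * Real.exp (-χ * n)) :
    IsCompact (⋃ t ∈ Set.Icc (0 : ℝ) T, S t '' Md)
    ∧ (∀ t : ℝ, 0 ≤ t →
        S t '' (⋃ t' ∈ Set.Icc (0 : ℝ) T, S t' '' Md) ⊆
          ⋃ t' ∈ Set.Icc (0 : ℝ) T, S t' '' Md)
    ∧ ∃ C' : ℝ, 0 ≤ C' ∧ ∃ τ : ℝ, 0 < τ ∧ ∀ t : ℝ, 0 ≤ t → ∀ b ∈ B,
        Metric.infDist (S t b) (⋃ t' ∈ Set.Icc (0 : ℝ) T, S t' '' Md) ≤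
          C' * Real.exp (-τ * t) :=
  discrete_to_continuous_exponential_attractor_general B S hmaps hsemi T hT L hlip hcont Md hMdB
    hMdcomp hMdinv C₀ χ hC₀ hχ hattr
end
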